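/- Suppose n ≥ 2, B is a normal q⁺_n-crystal, and b, c ∈ B. Then: (a) if wt(b)_1 ≠ 0, then e_1̄e_0(b) = e_0e_1̄(b) and e_1̄f_0(b) = f_0e_1̄(b) (with all operators sending 0 to 0); (b) if e_1̄(b) = c, then ε_0(b) ≤ ε_0(c) and φ_0(b) ≤ φ_0(c). -/

import Mathlib

namespace QPaper

abbrev Std := ℕ × Bool
abbrev PLetter := ℤ × Bool
abbrev NLet := ℕ × Bool
abbrev Tab := ℕ × ℕ → Option NLet
abbrev ZTab := ℕ × ℕ → Option PLetter

/-- iterate a partial operator -/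
def iterO {B : Type} (g : B → Option B) : ℕ → B → Option B
  | 0, b => some b
  | k + 1, b => (iterO g k b).bind g

/-- Raw data of a crystal with operators `e_i, f_i` (`1 ≤ i ≤ n-1`),
`e_1bar, f_1bar`, `e_0, f_0`, and a weight map with coordinates indexed `1,…,n`. -/
structure Crystal (n : ℕ) (B : Type) where
  wt : B → ℕ → ℤ
  e : ℕ → B → Option B
  f : ℕ → B → Option B
  ebar : B → Option B
  fbar : B → Option B
  e0 : B → Option B
  f0 : B → Option B

namespace Crystal

variable {n : ℕ} {B B' B'' : Type}

noncomputable def eps (C : Crystal n B) (i : ℕ) (b : B) : ℕ := sSup {k | iterO (C.e i) k b ≠ none}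
noncomputable def phi (C : Crystal n B) (i : ℕ) (b : B) : ℕ := sSup {k | iterO (C.f i) k b ≠ none}
noncomputable def epsBar (C : Crystal n B) (b : B) : ℕ := sSup {k | iterO C.ebar k b ≠ none}
noncomputable def phiBar (C : Crystal n B) (b : B) : ℕ := sSup {k | iterO C.fbar k b ≠ none}
noncomputable def eps0 (C : Crystal n B) (b : B) : ℕ := sSup {k | iterO C.e0 k b ≠ none}
noncomputable def phi0 (C : Crystal n B) (b : B) : ℕ := sSup {k | iterO C.f0 k b ≠ none}

/-- The `gl_n`-crystal axioms (S1)-(S2). -/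
structure IsGL (C : Crystal n B) : Prop where
  wt_zero : ∀ b i, i = 0 ∨ n < i → C.wt b i = 0
  e_range : ∀ i b, i = 0 ∨ n ≤ i → C.e i b = none
  f_range : ∀ i b, i = 0 ∨ n ≤ i → C.f i b = none
  e_bdd : ∀ i b, ∃ N, iterO (C.e i) N b = none
  f_bdd : ∀ i b, ∃ N, iterO (C.f i) N b = none
  ef_iff : ∀ i, 1 ≤ i → i ≤ n - 1 → ∀ b c, C.e i b = some c ↔ C.f i c = some b
  e_wt : ∀ i, 1 ≤ i → i ≤ n - 1 → ∀ b c, C.e i b = some c →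
    ∀ j, C.wt c j = C.wt b j + (if j = i then 1 else 0) - (if j = i + 1 then 1 else 0)
  string_eq : ∀ i, 1 ≤ i → i ≤ n - 1 → ∀ b,
    (C.phi i b : ℤ) - (C.eps i b : ℤ) = C.wt b i - C.wt b (i + 1)

/-- The `q_n`-crystal axioms (P1)-(P3) on top of the `gl_n` ones. -/
structure IsQ (C : Crystal n B) extends IsGL C : Prop where
  wt_nonneg : ∀ b i, 0 ≤ C.wt b i
  ebar_bdd : ∀ b, ∃ N, iterO C.ebar N b = none
  fbar_bdd : ∀ b, ∃ N, iterO C.fbar N b = none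
  bar_iff : ∀ b c, C.ebar b = some c ↔ C.fbar c = some b
  ebar_wt : 2 ≤ n → ∀ b c, C.ebar b = some c →
    (∀ j, C.wt c j = C.wt b j + (if j = 1 then 1 else 0) - (if j = 2 then 1 else 0)) ∧
    (∀ i, 3 ≤ i → i ≤ n - 1 → C.eps i b = C.eps i c ∧ C.phi i b = C.phi i c)
  bar_comm : 2 ≤ n → ∀ i, 3 ≤ i → i ≤ n - 1 → ∀ b,
    (C.e i b).bind C.ebar = (C.ebar b).bind (C.e i) ∧
    (C.e i b).bind C.fbar = (C.fbar b).bind (C.e i) ∧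
    (C.f i b).bind C.ebar = (C.ebar b).bind (C.f i) ∧
    (C.f i b).bind C.fbar = (C.fbar b).bind (C.f i)
  bar_string : 2 ≤ n → ∀ b,
    C.epsBar b + C.phiBar b = (if C.wt b 1 = 0 ∧ C.wt b 2 = 0 then 0 else 1)
  bar_none : n < 2 → ∀ b, C.ebar b = none ∧ C.fbar b = none

/-- The `q⁺_n`-crystal axioms (Q1)-(Q3) on top of the `q_n` ones. -/
structure IsQPlus (C : Crystal n B) extends IsQ C : Prop where
  e0_bdd : ∀ b, ∃ N, iterO C.e0 N b = none
  f0_bdd : ∀ b, ∃ N, iterO C.f0 N b = none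
  zero_iff : ∀ b c, C.e0 b = some c ↔ C.f0 c = some b
  e0_wt : ∀ b c, C.e0 b = some c →
    (∀ j, C.wt c j = C.wt b j) ∧
    (∀ i, 1 ≤ i → i ≤ n - 1 → C.eps i b = C.eps i c ∧ C.phi i b = C.phi i c) ∧
    (C.epsBar b = C.epsBar c ∧ C.phiBar b = C.phiBar c)
  zero_comm : ∀ i, 2 ≤ i → i ≤ n - 1 → ∀ b,
    (C.e i b).bind C.e0 = (C.e0 b).bind (C.e i) ∧
    (C.e i b).bind C.f0 = (C.f0 b).bind (C.e i) ∧
    (C.f i b).bind C.e0 = (C.e0 b).bind (C.f i) ∧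
    (C.f i b).bind C.f0 = (C.f0 b).bind (C.f i)
  zero_string : ∀ b, C.eps0 b + C.phi0 b = (if C.wt b 1 = 0 then 0 else 1)

/-- The standard `q⁺_n`-crystal `𝔹⁺_n` on letters `(k, primed?)`, `1 ≤ k ≤ n`. -/
def stdC (n : ℕ) : Crystal n Std where
  wt := fun l j => if j = l.1 ∧ 1 ≤ l.1 ∧ l.1 ≤ n then 1 else 0
  e := fun i l => if 1 ≤ i ∧ i ≤ n - 1 ∧ l.1 = i + 1 then some (i, l.2) else none
  f := fun i l => if 1 ≤ i ∧ i ≤ n - 1 ∧ l.1 = i then some (i + 1, l.2) else none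
  ebar := fun l => if 2 ≤ n ∧ l.1 = 2 then some (1, l.2) else none
  fbar := fun l => if 2 ≤ n ∧ l.1 = 1 then some (2, l.2) else none
  e0 := fun l => if 1 ≤ n ∧ l = (1, true) then some (1, false) else none
  f0 := fun l => if 1 ≤ n ∧ l = (1, false) then some (1, true) else none

/-- The one-element crystal of weight `0`. -/
def unitC (n : ℕ) : Crystal n PUnit where
  wt := fun _ _ => 0
  e := fun _ _ => none
  f := fun _ _ => none
  ebar := fun _ => none
  fbar := fun _ => none
  e0 := fun _ => none
  f0 := fun _ => none

/-- The `q⁺_n`-tensor product of two crystals (anti-Kashiwara convention). -/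
noncomputable def tensor (C : Crystal n B) (D : Crystal n B') : Crystal n (B × B') where
  wt := fun x j => C.wt x.1 j + D.wt x.2 j
  e := fun i x =>
    if C.eps i x.1 ≤ D.phi i x.2 then (D.e i x.2).map (fun c => (x.1, c))
    else (C.e i x.1).map (fun b => (b, x.2))
  f := fun i x =>
    if C.eps i x.1 < D.phi i x.2 then (D.f i x.2).map (fun c => (x.1, c))
    else (C.f i x.1).map (fun b => (b, x.2))
  e0 := fun x =>
    if C.wt x.1 1 ≠ 0 then (C.e0 x.1).map (fun b => (b, x.2))
    else (D.e0 x.2).map (fun c => (x.1, c))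
  f0 := fun x =>
    if C.wt x.1 1 ≠ 0 then (C.f0 x.1).map (fun b => (b, x.2))
    else (D.f0 x.2).map (fun c => (x.1, c))
  ebar := fun x =>
    if C.wt x.1 1 = 0 ∧ C.wt x.1 2 = 0 then (D.ebar x.2).map (fun c => (x.1, c))
    else if h : C.wt x.1 1 = 0 ∧ ((C.ebar x.1).bind C.f0).isSome ∧ (D.e0 x.2).isSome then
      some (((C.ebar x.1).bind C.f0).get h.2.1, (D.e0 x.2).get h.2.2)
    else if h : C.wt x.1 1 = 0 ∧ ((C.ebar x.1).bind C.e0).isSome ∧ (D.f0 x.2).isSome then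
      some (((C.ebar x.1).bind C.e0).get h.2.1, (D.f0 x.2).get h.2.2)
    else (C.ebar x.1).map (fun b => (b, x.2))
  fbar := fun x =>
    if C.wt x.1 1 = 0 ∧ C.wt x.1 2 = 0 then (D.fbar x.2).map (fun c => (x.1, c))
    else if h : C.wt x.1 1 = 1 ∧ ((C.f0 x.1).bind C.fbar).isSome ∧ (D.e0 x.2).isSome then
      some (((C.f0 x.1).bind C.fbar).get h.2.1, (D.e0 x.2).get h.2.2)
    else if h : C.wt x.1 1 = 1 ∧ ((C.e0 x.1).bind C.fbar).isSome ∧ (D.f0 x.2).isSome then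
      some (((C.e0 x.1).bind C.fbar).get h.2.1, (D.f0 x.2).get h.2.2)
    else (C.fbar x.1).map (fun b => (b, x.2))

/-- Underlying type of the `m`-th tensor power of the standard crystal. -/
def PowT : ℕ → Type
  | 0 => PUnit
  | m + 1 => PowT m × Std

/-- The `m`-th `q⁺_n`-tensor power `(𝔹⁺_n)^{⊗m}`. -/
noncomputable def powC (n : ℕ) : (m : ℕ) → Crystal n (PowT m)
  | 0 => unitC n
  | m + 1 => tensor (powC n m) (stdC n)

/-- One edge of the crystal graph. -/
def step (C : Crystal n B) (b c : B) : Prop :=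
  (∃ i, C.f i b = some c) ∨ C.fbar b = some c ∨ C.f0 b = some c

/-- Weak connectivity in the crystal graph. -/
def joined (C : Crystal n B) : B → B → Prop :=
  Relation.ReflTransGen (fun b c => step C b c ∨ step C c b)

/-- Weakly connected component (full subcrystal) through `b`. -/
def component (C : Crystal n B) (b : B) : Set B := {c | joined C b c}

def mapsAgree (C : Crystal n B) (D : Crystal n B') (φ : B → B') (x : B) : Prop :=
  (∀ j, D.wt (φ x) j = C.wt x j) ∧
  (∀ i, (C.e i x).map φ = D.e i (φ x)) ∧
  (∀ i, (C.f i x).map φ = D.f i (φ x)) ∧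
  ((C.ebar x).map φ = D.ebar (φ x)) ∧
  ((C.fbar x).map φ = D.fbar (φ x)) ∧
  ((C.e0 x).map φ = D.e0 (φ x)) ∧
  ((C.f0 x).map φ = D.f0 (φ x))

/-- `S ⊆ B` and `T ⊆ B'` are isomorphic as (sub)crystals. -/
def IsIsoOn (C : Crystal n B) (D : Crystal n B') (S : Set B) (T : Set B') : Prop :=
  ∃ φ : B → B', Set.BijOn φ S T ∧ ∀ x ∈ S, mapsAgree C D φ x

/-- `φ` is an isomorphism of crystals. -/
def IsIso (C : Crystal n B) (D : Crystal n B') (φ : B → B') : Prop :=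
  Function.Bijective φ ∧ ∀ x, mapsAgree C D φ x

/-- A quasi-isomorphism of crystals: restricts to an isomorphism on every full subcrystal. -/
def IsQuasiIso (C : Crystal n B) (D : Crystal n B') (ψ : B → B') : Prop :=
  ∀ b : B, ψ '' component C b = component D (ψ b) ∧
    Set.InjOn ψ (component C b) ∧
    ∀ x ∈ component C b, mapsAgree C D ψ x

/-- Normality for `q⁺_n`-crystals. -/
def IsNormal (C : Crystal n B) : Prop :=
  IsQPlus C ∧ ∀ b : B, ∃ (m : ℕ) (x : PowT m),
    IsIsoOn C (powC n m) (component C b) (component (powC n m) x)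

/-- The string-reversing involution `σ_i` from equation (3.3). -/
noncomputable def sigma (C : Crystal n B) (i : ℕ) (b : B) : B :=
  if C.eps i b ≤ C.phi i b then (iterO (C.f i) (C.phi i b - C.eps i b) b).getD b
  else (iterO (C.e i) (C.eps i b - C.phi i b) b).getD b

/-- The involution `σ_0`. -/
noncomputable def sigma0 (C : Crystal n B) (b : B) : B :=
  (C.e0 b).getD ((C.f0 b).getD b)

/-- `σ_k ⋯ σ_2 σ_1` (applying `σ_1` first). -/
noncomputable def sigmaDown (C : Crystal n B) : ℕ → B → B
  | 0 => id
  | k + 1 => fun b => C.sigma (k + 1) (C.sigmaDown k b)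

/-- `σ_1 σ_2 ⋯ σ_k` (applying `σ_k` first). -/
noncomputable def sigmaUp (C : Crystal n B) : ℕ → B → B
  | 0 => id
  | k + 1 => fun b => C.sigmaUp k (C.sigma (k + 1) b)

noncomputable def sigmaW0Aux (C : Crystal n B) : ℕ → B → B
  | 0 => id
  | k + 1 => fun b => C.sigmaW0Aux k (C.sigmaDown (k + 1) b)

/-- `σ_{w_0} = (σ_1)(σ_2σ_1)⋯(σ_{n-1}⋯σ_2σ_1)`. -/
noncomputable def sigmaW0 (C : Crystal n B) : B → B := C.sigmaW0Aux (n - 1)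

noncomputable def sigmaW0InvAux (C : Crystal n B) : ℕ → B → B
  | 0 => id
  | k + 1 => fun b => C.sigmaUp (k + 1) (C.sigmaW0InvAux k b)

/-- The inverse `σ_{w_0}^{-1}`. -/
noncomputable def sigmaW0Inv (C : Crystal n B) : B → B := C.sigmaW0InvAux (n - 1)

/-- `σ_k ⋯ σ_1 σ_0` (applying `σ_0` first). -/
noncomputable def sigmaDown0 (C : Crystal n B) : ℕ → B → B
  | 0 => C.sigma0
  | k + 1 => fun b => C.sigma (k + 1) (C.sigmaDown0 k b)

noncomputable def sigmaW0PlusAux (C : Crystal n B) : ℕ → B → B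
  | 0 => id
  | k + 1 => fun b => C.sigmaW0PlusAux k (C.sigmaDown0 k b)

/-- `σ_{w_0^+} = (σ_0)(σ_1σ_0)(σ_2σ_1σ_0)⋯(σ_{n-1}⋯σ_1σ_0)`. -/
noncomputable def sigmaW0Plus (C : Crystal n B) : B → B := C.sigmaW0PlusAux n

/-- The operators `e_{ī}` for `1 ≤ i ≤ n-1`, with `e_{1̄} = ebar` and
`e_{ī} = σ_{i-1} σ_i e_{\overline{i-1}} σ_i σ_{i-1}`. -/
noncomputable def eBarIdx (C : Crystal n B) : ℕ → B → Option B
  | 0, _ => none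
  | 1, b => C.ebar b
  | k + 2, b =>
    (C.eBarIdx (k + 1) (C.sigma (k + 2) (C.sigma (k + 1) b))).map
      (fun c => C.sigma (k + 1) (C.sigma (k + 2) c))

/-- The operators `f_{ī}`. -/
noncomputable def fBarIdx (C : Crystal n B) : ℕ → B → Option B
  | 0, _ => none
  | 1, b => C.fbar b
  | k + 2, b =>
    (C.fBarIdx (k + 1) (C.sigma (k + 2) (C.sigma (k + 1) b))).map
      (fun c => C.sigma (k + 1) (C.sigma (k + 2) c))

/-- `e_{ī′} = σ_{w_0} f_{\overline{n-i}} σ_{w_0}^{-1}`. -/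
noncomputable def eBarPrime (C : Crystal n B) (i : ℕ) (b : B) : Option B :=
  (C.fBarIdx (n - i) (C.sigmaW0Inv b)).map C.sigmaW0

/-- `f_{ī′} = σ_{w_0} e_{\overline{n-i}} σ_{w_0}^{-1}`. -/
noncomputable def fBarPrime (C : Crystal n B) (i : ℕ) (b : B) : Option B :=
  (C.eBarIdx (n - i) (C.sigmaW0Inv b)).map C.sigmaW0

/-- `e_0^{[i]} = σ_{i-1} ⋯ σ_1 e_0 σ_1 ⋯ σ_{i-1}`. -/
noncomputable def e0Idx (C : Crystal n B) (i : ℕ) (b : B) : Option B :=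
  (C.e0 (C.sigmaUp (i - 1) b)).map (C.sigmaDown (i - 1))

/-- `f_0^{[i]} = σ_{i-1} ⋯ σ_1 f_0 σ_1 ⋯ σ_{i-1}`. -/
noncomputable def f0Idx (C : Crystal n B) (i : ℕ) (b : B) : Option B :=
  (C.f0 (C.sigmaUp (i - 1) b)).map (C.sigmaDown (i - 1))

def IsGLHighest (C : Crystal n B) (b : B) : Prop :=
  ∀ i, 1 ≤ i → i ≤ n - 1 → C.e i b = none

def IsGLLowest (C : Crystal n B) (b : B) : Prop :=
  ∀ i, 1 ≤ i → i ≤ n - 1 → C.f i b = none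

def IsQHighest (C : Crystal n B) (b : B) : Prop :=
  IsGLHighest C b ∧ ∀ i, 1 ≤ i → i ≤ n - 1 → C.eBarIdx i b = none

def IsQLowest (C : Crystal n B) (b : B) : Prop :=
  IsGLLowest C b ∧ ∀ i, 1 ≤ i → i ≤ n - 1 → C.fBarPrime i b = none

def IsQPlusHighest (C : Crystal n B) (b : B) : Prop :=
  IsQHighest C b ∧ ∀ i, 1 ≤ i → i ≤ n → C.e0Idx i b = none

def IsQPlusLowest (C : Crystal n B) (b : B) : Prop :=
  IsQLowest C b ∧ ∀ i, 1 ≤ i → i ≤ n → C.f0Idx i b = none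

/-! ### `gl_n`-specific notions (ignoring the barred and `0` operators) -/

def glStep (C : Crystal n B) (b c : B) : Prop := ∃ i, C.f i b = some c

def glJoined (C : Crystal n B) : B → B → Prop :=
  Relation.ReflTransGen (fun b c => glStep C b c ∨ glStep C c b)

def glComponent (C : Crystal n B) (b : B) : Set B := {c | glJoined C b c}

def glMapsAgree (C : Crystal n B) (D : Crystal n B') (φ : B → B') (x : B) : Prop :=
  (∀ j, D.wt (φ x) j = C.wt x j) ∧
  (∀ i, (C.e i x).map φ = D.e i (φ x)) ∧
  (∀ i, (C.f i x).map φ = D.f i (φ x))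

def IsGLIsoOn (C : Crystal n B) (D : Crystal n B') (S : Set B) (T : Set B') : Prop :=
  ∃ φ : B → B', Set.BijOn φ S T ∧ ∀ x ∈ S, glMapsAgree C D φ x

/-- The standard `gl_n`-crystal `𝔹_n` on the letters `1,…,n`. -/
def stdGLC (n : ℕ) : Crystal n ℕ where
  wt := fun l j => if j = l ∧ 1 ≤ l ∧ l ≤ n then 1 else 0
  e := fun i l => if 1 ≤ i ∧ i ≤ n - 1 ∧ l = i + 1 then some i else none
  f := fun i l => if 1 ≤ i ∧ i ≤ n - 1 ∧ l = i then some (i + 1) else none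
  ebar := fun _ => none
  fbar := fun _ => none
  e0 := fun _ => none
  f0 := fun _ => none

def GLPowT : ℕ → Type
  | 0 => PUnit
  | m + 1 => GLPowT m × ℕ

noncomputable def glPowC (n : ℕ) : (m : ℕ) → Crystal n (GLPowT m)
  | 0 => unitC n
  | m + 1 => tensor (glPowC n m) (stdGLC n)

/-- Normality for `gl_n`-crystals. -/
def IsGLNormal (C : Crystal n B) : Prop :=
  IsGL C ∧ ∀ b : B, ∃ (m : ℕ) (x : GLPowT m),
    IsGLIsoOn C (glPowC n m) (glComponent C b) (glComponent (glPowC n m) x)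

end Crystal

open Crystal

/-- Character of a finite crystal, as a polynomial in `x_1,…,x_n`. -/
noncomputable def char {n : ℕ} {B : Type} [Fintype B] (C : Crystal n B) :
    MvPolynomial (Fin n) ℤ :=
  ∑ b : B, ∏ i : Fin n, MvPolynomial.X i ^ (C.wt b ((i : ℕ) + 1)).toNat

-- Restriction of a partial operator to a subtype.
open Classical in
noncomputable def restrictP {α : Type} (P : α → Prop) (g : α → Option α) (x : Subtype P) :
    Option (Subtype P) :=
  (g x.1).bind (fun y => if h : P y then some ⟨y, h⟩ else none)

/-! ### The crystal of words `W⁺_n(m)` -/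

/-- `i`-unpaired indices (0-based) of a word, via the parenthesis matching where letters
with value `i` are `)` and letters with value `i+1` are `(`. -/
def wUnpaired (i : ℕ) (w : List (ℕ × Bool)) : List ℕ :=
  let r := ((List.range w.length).zip w).foldl (fun (st : List ℕ × List ℕ) p =>
    if p.2.1 = i + 1 then (p.1 :: st.1, st.2)
    else if p.2.1 = i then
      match st.1 with
      | _o :: os => (os, st.2)
      | [] => (st.1, p.1 :: st.2)
    else st) ([], [])
  r.2.reverse ++ r.1.reverse

def wordF (n i : ℕ) (w : List (ℕ × Bool)) : Option (List (ℕ × Bool)) :=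
  if 1 ≤ i ∧ i ≤ n - 1 then
    match ((wUnpaired i w).filter (fun j => (w.getD j default).1 == i)).getLast? with
    | none => none
    | some j => some (w.set j (i + 1, (w.getD j default).2))
  else none

def wordE (n i : ℕ) (w : List (ℕ × Bool)) : Option (List (ℕ × Bool)) :=
  if 1 ≤ i ∧ i ≤ n - 1 then
    match ((wUnpaired i w).filter (fun j => (w.getD j default).1 == i + 1)).head? with
    | none => none
    | some j => some (w.set j (i, (w.getD j default).2))
  else none

def wordFbar (n : ℕ) (w : List (ℕ × Bool)) : Option (List (ℕ × Bool)) :=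
  if 2 ≤ n then
    match w.findIdx? (fun l => l.1 == 1) with
    | none => none
    | some j =>
      if (w.take j).any (fun l => l.1 == 2) then none
      else
        match (w.drop (j + 1)).findIdx? (fun l => l.1 == 1) with
        | none => some (w.set j (2, (w.getD j default).2))
        | some k' =>
          let k := j + 1 + k'
          let a := w.getD j default
          let b := w.getD k default
          if a.2 = b.2 then some (w.set j (2, a.2))
          else if a.2 = false then some ((w.set j (2, true)).set k (1, false))
          else some ((w.set j (2, false)).set k (1, true))
  else none

def wordEbar (n : ℕ) (w : List (ℕ × Bool)) : Option (List (ℕ × Bool)) :=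
  if 2 ≤ n then
    match w.findIdx? (fun l => l.1 == 2) with
    | none => none
    | some j =>
      if (w.take j).any (fun l => l.1 == 1) then none
      else
        match (w.drop (j + 1)).findIdx? (fun l => l.1 == 1) with
        | none => some (w.set j (1, (w.getD j default).2))
        | some k' =>
          let k := j + 1 + k'
          let a := w.getD j default
          let b := w.getD k default
          if a.2 = b.2 then some (w.set j (1, a.2))
          else if a.2 = true then some ((w.set j (1, false)).set k (1, true))
          else some ((w.set j (1, true)).set k (1, false))
  else none

def wordF0 (w : List (ℕ × Bool)) : Option (List (ℕ × Bool)) :=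
  match w.findIdx? (fun l => l.1 == 1) with
  | some j => if (w.getD j default).2 = false then some (w.set j (1, true)) else none
  | none => none

def wordE0 (w : List (ℕ × Bool)) : Option (List (ℕ × Bool)) :=
  match w.findIdx? (fun l => l.1 == 1) with
  | some j => if (w.getD j default).2 = true then some (w.set j (1, false)) else none
  | none => none

/-- Membership in `W⁺_n(m)`. -/
def WordP (n m : ℕ) (w : List (ℕ × Bool)) : Prop :=
  w.length = m ∧ ∀ l ∈ w, 1 ≤ l.1 ∧ l.1 ≤ n

/-- The `q⁺_n`-crystal of words `W⁺_n(m)`. -/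
noncomputable def wordC (n m : ℕ) : Crystal n (Subtype (WordP n m)) where
  wt := fun w k =>
    if 1 ≤ k ∧ k ≤ n then ((w.1.filter (fun l => l.1 == k)).length : ℤ) else 0
  e := fun i => restrictP _ (wordE n i)
  f := fun i => restrictP _ (wordF n i)
  ebar := restrictP _ (wordEbar n)
  fbar := restrictP _ (wordFbar n)
  e0 := restrictP _ wordE0
  f0 := restrictP _ wordF0

/-- Interpret a word as an element of `(𝔹⁺_n)^{⊗m}`. -/
def toPow : (m : ℕ) → List (ℕ × Bool) → PowT m
  | 0, _ => PUnit.unit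
  | m + 1, w => (toPow m w.dropLast, w.getLast?.getD (0, false))


/-! ### Involution words and increasing factorizations -/

/-- One step of the Demazure product. -/
def demStep (π : Equiv.Perm ℤ) (i : ℤ) : Equiv.Perm ℤ :=
  if π (i + 1) < π i then π else π * Equiv.swap i (i + 1)

/-- Demazure product `1 ∘ s_{a_1} ∘ ⋯ ∘ s_{a_m}`. -/
def dem (w : List ℤ) : Equiv.Perm ℤ := w.foldl demStep 1

/-- `s_{a_m} ∘ ⋯ ∘ s_{a_1} ∘ 1 ∘ s_{a_1} ∘ ⋯ ∘ s_{a_m}`. -/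
def invEnd (w : List ℤ) : Equiv.Perm ℤ := dem (w.reverse ++ w)

/-- `w` is an involution word for `z`. -/
def IsInvWord (z : Equiv.Perm ℤ) (w : List ℤ) : Prop :=
  invEnd w = z ∧ ∀ v : List ℤ, invEnd v = z → w.length ≤ v.length

/-- The (0-based) index `j` is a commutation of the involution word `w`. -/
def IsCommutation (w : List ℤ) (j : ℕ) : Prop :=
  invEnd (w.take j) (w.getD j 0) = w.getD j 0 ∧
  invEnd (w.take j) (w.getD j 0 + 1) = w.getD j 0 + 1

/-- Remove primes from a primed word. -/
def unpr (w : List PLetter) : List ℤ := w.map Prod.fst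

/-- `w` is a primed involution word for `z`. -/
def IsPrimedInvWord (z : Equiv.Perm ℤ) (w : List PLetter) : Prop :=
  IsInvWord z (unpr w) ∧
  ∀ j, j < w.length → (w.getD j default).2 = true → IsCommutation (unpr w) j

/-- Value of a primed letter, doubled: `i ↦ 2i`, `i′ ↦ 2i - 1`. -/
def pvZ (l : PLetter) : ℤ := 2 * l.1 - (if l.2 then 1 else 0)

def StrictIncrW (w : List PLetter) : Prop := List.Chain' (· < ·) (w.map pvZ)

/-- Concatenation `a¹a²⋯aⁿ` of a tuple of primed words. -/
def concatT {n : ℕ} (a : Fin n → List PLetter) : List PLetter := (List.ofFn a).flatten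

/-- Membership in `Incr⁺_n(z)`. -/
def IncrP (n : ℕ) (z : Equiv.Perm ℤ) (a : Fin n → List PLetter) : Prop :=
  (∀ i, StrictIncrW (a i)) ∧ IsPrimedInvWord z (concatT a)

/-- Letters of `v` left unpaired by the pairing of Definition 5.5. -/
def pairAvail (v w : List PLetter) : List PLetter :=
  w.reverse.foldl (fun avail wj =>
    match avail.find? (fun x => decide (wj.1 < x.1)) with
    | some x => avail.erase x
    | none => avail) v

/-- Letters of `w` left unpaired by the pairing of Definition 5.5 (in increasing order). -/
def unpairedSnd (v w : List PLetter) : List PLetter :=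
  (w.reverse.foldl (fun (st : List PLetter × List PLetter) wj =>
    match st.1.find? (fun x => decide (wj.1 < x.1)) with
    | some x => (st.1.erase x, st.2)
    | none => (st.1, wj :: st.2)) (v, [])).2

def smallestAbsentAux : ℕ → ℤ → List ℤ → ℤ
  | 0, y, _ => y
  | fuel + 1, y, s => if y ∈ s then smallestAbsentAux fuel (y + 1) s else y

/-- The smallest integer `≥ y` not occurring in `s`. -/
def smallestAbsent (y : ℤ) (s : List ℤ) : ℤ := smallestAbsentAux (s.length + 1) y s

def largestAbsentAux : ℕ → ℤ → List ℤ → ℤ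
  | 0, y, _ => y
  | fuel + 1, y, s => if y ∈ s then largestAbsentAux fuel (y - 1) s else y

/-- The largest integer `≤ y` not occurring in `s`. -/
def largestAbsent (y : ℤ) (s : List ℤ) : ℤ := largestAbsentAux (s.length + 1) y s

/-- Ordered insertion of a primed letter into a strictly increasing primed word. -/
def insLetter : PLetter → List PLetter → List PLetter
  | l, [] => [l]
  | l, x :: xs => if pvZ l ≤ pvZ x then l :: x :: xs else x :: insLetter l xs

/-- Prime adjustment in case (L2) of Definition 5.6. -/
def adjustF (x y : ℤ) (p : List PLetter × List PLetter) : List PLetter × List PLetter :=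
  (List.range (y - x).toNat).foldl (fun q k =>
    let t : ℤ := x + k
    if ((t + 1, false) : PLetter) ∈ q.1 ∧ ((t, true) : PLetter) ∈ q.2 then
      (q.1.map (fun l => if l = ((t + 1, false) : PLetter) then (t + 1, true) else l),
       q.2.map (fun l => if l = ((t, true) : PLetter) then (t, false) else l))
    else q) p

/-- Prime adjustment in case (R2) of Definition 5.7. -/
def adjustE (x y : ℤ) (p : List PLetter × List PLetter) : List PLetter × List PLetter :=
  (List.range (y - x).toNat).foldl (fun q k =>
    let t : ℤ := x + k
    if ((t + 1, true) : PLetter) ∈ q.1 ∧ ((t, false) : PLetter) ∈ q.2 then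
      (q.1.map (fun l => if l = ((t + 1, true) : PLetter) then (t + 1, false) else l),
       q.2.map (fun l => if l = ((t, false) : PLetter) then (t, true) else l))
    else q) p

def upd2 {n : ℕ} (a : Fin n → List PLetter) (i : Fin n) (v : List PLetter)
    (j : Fin n) (w : List PLetter) : Fin n → List PLetter :=
  Function.update (Function.update a i v) j w

/-- The lowering operator `f_i` on increasing factorizations (Definition 5.6). -/
def rawIncrF (n i : ℕ) (a : Fin n → List PLetter) : Option (Fin n → List PLetter) :=
  if h : 1 ≤ i ∧ i ≤ n - 1 then
    let i1 : Fin n := ⟨i - 1, by omega⟩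
    let i2 : Fin n := ⟨i, by omega⟩
    let v := a i1
    let w := a i2
    match (pairAvail v w).getLast? with
    | none => none
    | some x =>
      let y := smallestAbsent x.1 (unpr w)
      if x.2 then
        some (upd2 a i1 (v.erase x) i2 (insLetter (y, true) w))
      else
        let p := adjustF x.1 y (v.erase x, insLetter (y, false) w)
        some (upd2 a i1 p.1 i2 p.2)
  else none

/-- The raising operator `e_i` on increasing factorizations (Definition 5.7). -/
def rawIncrE (n i : ℕ) (a : Fin n → List PLetter) : Option (Fin n → List PLetter) :=
  if h : 1 ≤ i ∧ i ≤ n - 1 then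
    let i1 : Fin n := ⟨i - 1, by omega⟩
    let i2 : Fin n := ⟨i, by omega⟩
    let v := a i1
    let w := a i2
    match (unpairedSnd v w).getLast? with
    | none => none
    | some y =>
      let x := largestAbsent y.1 (unpr v)
      if y.2 then
        some (upd2 a i1 (insLetter (x, true) v) i2 (w.erase y))
      else
        let p := adjustE x y.1 (insLetter (x, false) v, w.erase y)
        some (upd2 a i1 p.1 i2 p.2)
  else none

/-- The lowering operator `f_1̄` on increasing factorizations (Definition 5.8). -/
def rawIncrFbar (n : ℕ) (a : Fin n → List PLetter) : Option (Fin n → List PLetter) :=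
  if h : 2 ≤ n then
    let i1 : Fin n := ⟨0, by omega⟩
    let i2 : Fin n := ⟨1, by omega⟩
    match a i1 with
    | [] => none
    | l :: rest =>
      if (a i2).all (fun m => decide (pvZ l < pvZ m)) then
        match rest with
        | r :: rs =>
          if l.2 ≠ r.2 then
            some (upd2 a i1 ((r.1, !r.2) :: rs) i2 ((l.1, !l.2) :: a i2))
          else some (upd2 a i1 rest i2 (l :: a i2))
        | [] => some (upd2 a i1 [] i2 (l :: a i2))
      else none
  else none

/-- The raising operator `e_1̄` on increasing factorizations (Definition 5.9). -/
def rawIncrEbar (n : ℕ) (a : Fin n → List PLetter) : Option (Fin n → List PLetter) :=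
  if h : 2 ≤ n then
    let i1 : Fin n := ⟨0, by omega⟩
    let i2 : Fin n := ⟨1, by omega⟩
    match a i2 with
    | [] => none
    | l :: rest2 =>
      if (a i1).all (fun m => decide (pvZ l < pvZ m)) then
        match a i1 with
        | r :: rs =>
          if l.2 ≠ r.2 then
            some (upd2 a i1 ((l.1, !l.2) :: (r.1, !r.2) :: rs) i2 rest2)
          else some (upd2 a i1 (l :: a i1) i2 rest2)
        | [] => some (upd2 a i1 [l] i2 rest2)
      else none
  else none

/-- The operator `f_0` on increasing factorizations (Definition 5.10). -/
def rawIncrF0 (n : ℕ) (a : Fin n → List PLetter) : Option (Fin n → List PLetter) :=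
  if h : 1 ≤ n then
    let i1 : Fin n := ⟨0, by omega⟩
    match a i1 with
    | [] => none
    | l :: rest =>
      if l.2 = false then some (Function.update a i1 ((l.1, true) :: rest)) else none
  else none

/-- The operator `e_0` on increasing factorizations (Definition 5.10). -/
def rawIncrE0 (n : ℕ) (a : Fin n → List PLetter) : Option (Fin n → List PLetter) :=
  if h : 1 ≤ n then
    let i1 : Fin n := ⟨0, by omega⟩
    match a i1 with
    | [] => none
    | l :: rest =>
      if l.2 = true then some (Function.update a i1 ((l.1, false) :: rest)) else none
  else none

/-- The `q⁺_n`-crystal `Incr⁺_n(z)`. -/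
noncomputable def incrC (n : ℕ) (z : Equiv.Perm ℤ) : Crystal n (Subtype (IncrP n z)) where
  wt := fun a k => if h : 1 ≤ k ∧ k ≤ n then ((a.1 ⟨k - 1, by omega⟩).length : ℤ) else 0
  e := fun i => restrictP _ (rawIncrE n i)
  f := fun i => restrictP _ (rawIncrF n i)
  ebar := restrictP _ (rawIncrEbar n)
  fbar := restrictP _ (rawIncrFbar n)
  e0 := restrictP _ (rawIncrE0 n)
  f0 := restrictP _ (rawIncrF0 n)


/-! ### Coxeter-Knuth operators, marked cycles, descents -/

/-- The action of `ock` on a 3-letter window. -/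
def ockTriple (a b c : PLetter) : PLetter × PLetter × PLetter :=
  if a.1 = c.1 ∧ (b.1 = a.1 + 1 ∨ b.1 + 1 = a.1) ∧ b.2 = false ∧ ¬(a.2 = true ∧ c.2 = true) then
    ((b.1, c.2), (a.1, false), (b.1, a.2))
  else if (a.1 < c.1 ∧ c.1 < b.1) ∨ (b.1 < c.1 ∧ c.1 < a.1) then (b, a, c)
  else if (c.1 < a.1 ∧ a.1 < b.1) ∨ (b.1 < a.1 ∧ a.1 < c.1) then (a, c, b)
  else (a, b, c)

/-- The orthogonal Coxeter-Knuth operator `ock_i` (with 1-based window positions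
`i, i+1, i+2` for `i ≥ 1`, and the initial-2-letter rule for `i = 0`). -/
def ock (i : ℕ) (w : List PLetter) : List PLetter :=
  if i = 0 then
    match w with
    | x :: y :: rest => (y.1, x.2) :: (x.1, y.2) :: rest
    | _ => w
  else if i + 2 ≤ w.length then
    let a := w.getD (i - 1) default
    let b := w.getD i default
    let c := w.getD (i + 1) default
    let t := ockTriple a b c
    w.take (i - 1) ++ [t.1, t.2.1, t.2.2] ++ w.drop (i + 2)
  else w

/-- The cycle `γ_j(w) = s_{w_m} ⋯ s_{w_{j+2}} s_{w_{j+1}} ({w_j, w_j + 1})` (0-based `j`). -/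
def gammaCyc (w : List ℤ) (j : ℕ) : Set ℤ :=
  let P : Equiv.Perm ℤ := (((w.drop (j + 1)).reverse).map (fun t => Equiv.swap t (t + 1))).prod
  {P (w.getD j 0), P (w.getD j 0 + 1)}

/-- The set of marked cycles of a primed involution word. -/
def markedOf (w : List PLetter) : Set (Set ℤ) :=
  {S | ∃ j, j < w.length ∧ (w.getD j default).2 = true ∧ S = gammaCyc (unpr w) j}

/-- Descent set of a primed word (1-based positions). -/
def DesSet (w : List PLetter) : Set ℕ :=
  {i | 1 ≤ i ∧ i + 1 ≤ w.length ∧ pvZ (w.getD i default) < pvZ (w.getD (i - 1) default)}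

/-! ### Unprimed pairing and reduced words (Lemmas 5.3 and 5.6) -/

/-- Letters of `v` left unpaired by the pairing of Definition 5.5, unprimed version. -/
def pairAvailZ (v w : List ℤ) : List ℤ :=
  w.reverse.foldl (fun avail wj =>
    match avail.find? (fun x => decide (wj < x)) with
    | some x => avail.erase x
    | none => avail) v

/-- The permutation `s_{a_1} s_{a_2} ⋯ s_{a_m}`. -/
def permOf (w : List ℤ) : Equiv.Perm ℤ := (w.map (fun i => Equiv.swap i (i + 1))).prod

/-- `w` is a reduced word (for some element of `S_ℤ`). -/
def IsReducedWord (w : List ℤ) : Prop :=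
  ∀ v : List ℤ, permOf v = permOf w → w.length ≤ v.length

/-- Ordered insertion of an integer into a strictly increasing integer word. -/
def insLetterZ : ℤ → List ℤ → List ℤ
  | x, [] => [x]
  | x, y :: ys => if x ≤ y then x :: y :: ys else y :: insLetterZ x ys


/-! ### Semistandard shifted tableaux and their crystal operators -/

/-- Doubled value of a tableau letter: `k ↦ 2k`, `k′ ↦ 2k - 1`. -/
def pvN (l : NLet) : ℤ := 2 * (l.1 : ℤ) - (if l.2 then 1 else 0)

/-- `lam` is a strict partition with at most `n` parts (coordinates `1,…,n`). -/
def IsStrictPart (n : ℕ) (lam : ℕ → ℕ) : Prop :=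
  (∀ i, i = 0 ∨ n < i → lam i = 0) ∧
  (∀ i, 1 ≤ i → (lam (i + 1) < lam i ∨ (lam i = 0 ∧ lam (i + 1) = 0)))

/-- Membership of a (1-based) box in the shifted diagram of `lam`. -/
abbrev InSD (lam : ℕ → ℕ) (p : ℕ × ℕ) : Prop :=
  1 ≤ p.1 ∧ p.1 ≤ p.2 ∧ p.2 < p.1 + lam p.1

/-- `T` is a semistandard shifted tableau of shape `lam` with entries at most `n`. -/
def IsShTab (n : ℕ) (lam : ℕ → ℕ) (T : Tab) : Prop :=
  (∀ p : ℕ × ℕ, (T p).isSome ↔ InSD lam p) ∧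
  (∀ p v, T p = some v → 1 ≤ v.1 ∧ v.1 ≤ n) ∧
  (∀ i j v w, T (i, j) = some v → T (i, j + 1) = some w →
    pvN v ≤ pvN w ∧ (pvN v = pvN w → v.2 = false)) ∧
  (∀ i j v w, T (i, j) = some v → T (i + 1, j) = some w →
    pvN v ≤ pvN w ∧ (pvN v = pvN w → v.2 = true))

def setE (T : Tab) (q : ℕ × ℕ) (l : NLet) : Tab := fun p => if p = q then some l else T p

def ceilIs (T : Tab) (q : ℕ × ℕ) (v : ℕ) : Bool :=
  match T q with
  | some l => l.1 == v
  | none => false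

/-- Boxes of `T` with entries in `{i′, i, (i+1)′, i+1}`, in shifted reading order. -/
def readBoxes (T : Tab) (i bnd : ℕ) : List (ℕ × ℕ) :=
  ((List.range bnd).reverse.map (fun k0 =>
    let k := k0 + 1
    ((List.range bnd).filterMap (fun r0 =>
      let r := r0 + 1
      match T (r, k) with
      | some (v, true) => if v = i ∨ v = i + 1 then some ((r, k) : ℕ × ℕ) else none
      | _ => none)) ++
    ((List.range bnd).filterMap (fun c0 =>
      let c := c0 + 1
      match T (k, c) with
      | some (v, false) => if v = i ∨ v = i + 1 then some ((k, c) : ℕ × ℕ) else none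
      | _ => none)))).flatten

/-- Unpaired boxes after the parenthesis matching (entries `i` are `)`, `i+1` are `(`). -/
def bracketBoxes (T : Tab) (i : ℕ) (l : List (ℕ × ℕ)) : List (ℕ × ℕ) :=
  let r := l.foldl (fun (st : List (ℕ × ℕ) × List (ℕ × ℕ)) q =>
    if ceilIs T q (i + 1) then (q :: st.1, st.2)
    else
      match st.1 with
      | _o :: os => (os, st.2)
      | [] => (st.1, q :: st.2)) ([], [])
  r.2.reverse ++ r.1.reverse

/-- Most-northwest box of the ribbon (within `inSet`) containing the given box. -/
def nwEnd (inSet : ℕ × ℕ → Bool) : ℕ → ℕ × ℕ → ℕ × ℕ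
  | 0, p => p
  | fuel + 1, p =>
    if inSet (p.1 + 1, p.2) = true then nwEnd inSet fuel (p.1 + 1, p.2)
    else if 1 ≤ p.2 ∧ inSet (p.1, p.2 - 1) = true then nwEnd inSet fuel (p.1, p.2 - 1)
    else p

/-- Walk southeast through a ribbon looking for the first box satisfying `pred`. -/
def seFind (inSet pred : ℕ × ℕ → Bool) : ℕ → ℕ × ℕ → Option (ℕ × ℕ)
  | 0, _ => none
  | fuel + 1, p =>
    if pred p = true then some p
    else if 2 ≤ p.1 ∧ inSet (p.1 - 1, p.2) = true then seFind inSet pred fuel (p.1 - 1, p.2)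
    else if inSet (p.1, p.2 + 1) = true then seFind inSet pred fuel (p.1, p.2 + 1)
    else none

/-- Interchange the primes on the entries in boxes `p` and `q`. -/
def swapPr (T : Tab) (p q : ℕ × ℕ) : Tab :=
  match T p, T q with
  | some a, some b => if a.2 ≠ b.2 then setE (setE T p (a.1, b.2)) q (b.1, a.2) else T
  | _, _ => T

/-- The lowering operator `f_i` on shifted tableaux (Definition 6.4). -/
def tabF (n bnd i : ℕ) (T : Tab) : Option Tab :=
  if 1 ≤ i ∧ i ≤ n - 1 then
    match ((bracketBoxes T i (readBoxes T i bnd)).filter (fun q => ceilIs T q i)).getLast? with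
    | none => none
    | some q =>
      let x := q.1
      let y := q.2
      match T q with
      | some (_, false) =>
        if T (x, y + 1) = some (i + 1, true) then
          some (setE (setE T q (i + 1, true)) (x, y + 1) (i + 1, false))
        else if ¬(ceilIs T (x + 1, y) (i + 1) = true) then
          some (setE T q (i + 1, false))
        else
          let nw := nwEnd (fun r => ceilIs T r (i + 1)) (2 * bnd + 2) (x + 1, y)
          if nw.1 ≠ nw.2 then
            some (setE (setE T q (i + 1, true)) nw (i + 1, false))
          else
            some (swapPr (setE T q (i + 1, true)) (nw.1, nw.1) (nw.1 - 1, nw.1 - 1))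
      | some (_, true) =>
        if T (x + 1, y) = some (i, false) then
          some (setE (setE T q (i, false)) (x + 1, y) (i + 1, true))
        else if ¬(T (x, y + 1) = some (i, false) ∨ T (x, y + 1) = some (i + 1, true)) then
          some (setE T q (i + 1, true))
        else
          match seFind (fun r => ceilIs T r i)
              (fun r => decide (T r = some (i, false) ∧
                ¬(T (r.1, r.2 + 1) = some (i, false) ∨ T (r.1, r.2 + 1) = some (i + 1, true))))
              (2 * bnd + 2) q with
          | some r => some (setE (setE T q (i, false)) r (i + 1, true))
          | none => none
      | none => none
  else none

/-- The lowering operator `f_1̄` on shifted tableaux (Definition 6.7). -/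
def tabFbar (n bnd : ℕ) (T : Tab) : Option Tab :=
  if 2 ≤ n then
    let row1 : List (ℕ × ℕ) := (List.range bnd).map (fun c => (1, c + 1))
    if row1.any (fun q => decide (T q = some (2, true))) then none
    else
      match (row1.filter (fun q => ceilIs T q 1)).getLast? with
      | none => none
      | some q =>
        if q.1 = q.2 ∧ T q = some (1, false) then some (setE T q (2, false))
        else some (setE T q (2, true))
  else none

/-- The operator `f_0` on shifted tableaux. -/
def tabF0 (T : Tab) : Option Tab :=
  if T (1, 1) = some (1, false) then some (setE T (1, 1) (1, true))
  else none

/-- The operator `e_0` on shifted tableaux. -/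
def tabE0 (T : Tab) : Option Tab :=
  if T (1, 1) = some (1, true) then some (setE T (1, 1) (1, false))
  else none

-- Partial inverse of a partial operator, via choice.
open Classical in
noncomputable def pInv {α : Type} (g : α → Option α) (y : α) : Option α :=
  if h : ∃ x, g x = some y then some h.choose else none

/-- The underlying type of `ShTab⁺_n(lam)`. -/
def ShTy (n : ℕ) (lam : ℕ → ℕ) : Type := Subtype (IsShTab n lam)

/-- The `q⁺_n`-crystal `ShTab⁺_n(lam)`. -/
noncomputable def shtabC (n : ℕ) (lam : ℕ → ℕ) : Crystal n (ShTy n lam) :=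
  let bnd := n + lam 1 + 2
  let fop : ℕ → ShTy n lam → Option (ShTy n lam) := fun i => restrictP _ (tabF n bnd i)
  let fbarop : ShTy n lam → Option (ShTy n lam) := restrictP _ (tabFbar n bnd)
  { wt := fun T k =>
      if 1 ≤ k ∧ k ≤ n then
        (((List.range bnd).map (fun r =>
          ((List.range bnd).filter (fun c => ceilIs T.1 (r + 1, c + 1) k)).length)).sum : ℤ)
      else 0
    f := fop
    e := fun i => pInv (fop i)
    fbar := fbarop
    ebar := pInv fbarop
    f0 := restrictP _ tabF0
    e0 := restrictP _ tabE0 }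

/-- The tableau `T^highest_lam`, with every entry in row `i` equal to `i`. -/
def highestTab (lam : ℕ → ℕ) : Tab := fun p => if InSD lam p then some (p.1, false) else none

def shiftLam (lam : ℕ → ℕ) (k : ℕ) : ℕ → ℕ := fun i => lam (i + k)

/-- The defining property of `T^lowest_lam`: a semistandard shifted tableau of shape `lam`
with no primed diagonal entries, whose entries on the `k`-th ribbon all equal
`(n-k)′` or `n-k`. -/
def IsLowestSpec (n : ℕ) (lam : ℕ → ℕ) (T : Tab) : Prop :=
  IsShTab n lam T ∧
  (∀ i v, T (i, i) = some v → v.2 = false) ∧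
  (∀ k, k < n → ∀ p : ℕ × ℕ, InSD (shiftLam lam k) p → ¬InSD (shiftLam lam (k + 1)) p →
    ∀ v, T p = some v → v.1 = n - k)

/-- Add a prime to every diagonal entry. -/
def primeDiag (T : Tab) : Tab := fun p =>
  if p.1 = p.2 then (T p).map (fun l => (l.1, true)) else T p


/-! ### Orthogonal Edelman-Greene insertion -/

def setZ (T : ZTab) (q : ℕ × ℕ) (l : PLetter) : ZTab := fun p => if p = q then some l else T p

def swapPrZ (T : ZTab) (p q : ℕ × ℕ) : ZTab :=
  match T p, T q with
  | some a, some b => if a.2 ≠ b.2 then setZ (setZ T p (a.1, b.2)) q (b.1, a.2) else T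
  | _, _ => T

/-- One insertion of a letter into a shifted tableau, per Definition 7.1; returns the
resulting tableau, the box added, and whether the process ended in column insertion. -/
def oegIns (bnd : ℕ) : ℕ → ZTab → Bool → ℕ → PLetter → ZTab × ((ℕ × ℕ) × Bool)
  | 0, T, isCol, _, _ => (T, ((0, 0), isCol))
  | fuel + 1, T, isCol, k, x =>
    let cells : List (ℕ × ℕ) :=
      if isCol then (List.range bnd).map (fun r => (r + 1, k))
      else (List.range bnd).map (fun c => (k, k + c))
    let filled := cells.filter (fun q => (T q).isSome)
    match filled.find? (fun q => decide (x.1 ≤ ((T q).getD default).1)) with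
    | none =>
      match cells.find? (fun q => (T q).isNone) with
      | none => (T, ((0, 0), isCol))
      | some q =>
        if q.1 = q.2 then (setZ T q (x.1, false), (q, isCol || x.2))
        else (setZ T q x, (q, isCol))
    | some qy =>
      let y := (T qy).getD default
      if y.1 = x.1 then
        let T' := match filled.find? (fun q => decide (x.1 < ((T q).getD default).1)) with
          | some qt => swapPrZ T qy qt
          | none => T
        oegIns bnd fuel T' (decide (qy.1 = qy.2)) (k + 1) (x.1 + 1, x.2)
      else
        if qy.1 = qy.2 then
          oegIns bnd fuel (setZ T qy (x.1, false)) true (k + 1) (y.1, y.2 || x.2)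
        else
          oegIns bnd fuel (setZ T qy x) false (k + 1) y

def emptyZTab : ZTab := fun _ => none
def emptyTab : Tab := fun _ => none

/-- The orthogonal Edelman-Greene insertion and recording tableaux `(P^O_EG(a), Q^O_EG(a))`. -/
def oegPQ (n : ℕ) (a : Fin n → List PLetter) : ZTab × Tab :=
  let letters : List (PLetter × ℕ) :=
    (List.ofFn (fun i : Fin n => (a i).map (fun l => (l, (i : ℕ) + 1)))).flatten
  let bnd := letters.length + 2
  letters.foldl (fun (PQ : ZTab × Tab) xl =>
    let r := oegIns bnd bnd PQ.1 false 1 xl.1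
    (r.1, setE PQ.2 r.2.1 (xl.2, r.2.2))) (emptyZTab, emptyTab)

def oegP (n : ℕ) (a : Fin n → List PLetter) : ZTab := (oegPQ n a).1
def oegQ (n : ℕ) (a : Fin n → List PLetter) : Tab := (oegPQ n a).2

/-! ### Disjoint unions of crystals -/

def sigmaC {n : ℕ} {ι : Type} {β : ι → Type} (Cf : ∀ i, Crystal n (β i)) :
    Crystal n (Σ i, β i) where
  wt := fun x => (Cf x.1).wt x.2
  e := fun k x => ((Cf x.1).e k x.2).map (fun b => ⟨x.1, b⟩)
  f := fun k x => ((Cf x.1).f k x.2).map (fun b => ⟨x.1, b⟩)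
  ebar := fun x => ((Cf x.1).ebar x.2).map (fun b => ⟨x.1, b⟩)
  fbar := fun x => ((Cf x.1).fbar x.2).map (fun b => ⟨x.1, b⟩)
  e0 := fun x => ((Cf x.1).e0 x.2).map (fun b => ⟨x.1, b⟩)
  f0 := fun x => ((Cf x.1).f0 x.2).map (fun b => ⟨x.1, b⟩)

/-- Involutions in `S_ℤ` (finitely supported permutations of `ℤ`). -/
def IZ : Type := {z : Equiv.Perm ℤ // z * z = 1 ∧ {i : ℤ | z i ≠ i}.Finite}

/-- The disjoint union `⊔_z Incr⁺_n(z)` over all involutions `z ∈ S_ℤ`. -/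
def DomT (n : ℕ) : Type := Σ z : IZ, Subtype (IncrP n z.1)

noncomputable def domC (n : ℕ) : Crystal n (DomT n) := sigmaC (fun z : IZ => incrC n z.1)

/-- Strict partitions in `ℕ^n`. -/
def SPart (n : ℕ) : Type := {lam : ℕ → ℕ // IsStrictPart n lam}

/-- The disjoint union `⊔_lam ShTab⁺_n(lam)` over all strict partitions `lam ∈ ℕ^n`. -/
def CodT (n : ℕ) : Type := Σ lam : SPart n, ShTy n lam.1

noncomputable def codC (n : ℕ) : Crystal n (CodT n) := sigmaC (fun lam : SPart n => shtabC n lam.1)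

/-
A full subcrystal of a normal `q⁺_n`-crystal is isomorphic to one of a tensor power of `𝔹⁺_n`,
so (a) only has to be checked there. It is part of a list of properties of `e_0, f_0, e_1̄`
(`IsZeroBarCompatible`) which hold in `𝔹⁺_n` and pass to tensor products, by a case analysis
along the definition of `e_1̄ (u ⊗ l)`. For (b): `ε_0, φ_0 ≤ 1`, and if `e_0 b` is defined then
so is `e_1̄ e_0 b`, because `e_0` preserves `ε_1̄`; by (a) it equals `e_0 c`. Similarly for `f_0`.
-/

section OptionOps

variable {α β : Type*}

theorem map_bind_eq_of_map_eq {φ : α → β} {S : Set α} {g h : α → Option α}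
    {g' h' : β → Option β} (hgS : ∀ x ∈ S, ∀ y, g x = some y → y ∈ S)
    (hg : ∀ x ∈ S, (g x).map φ = g' (φ x)) (hh : ∀ x ∈ S, (h x).map φ = h' (φ x))
    {x : α} (hx : x ∈ S) : ((g x).bind h).map φ = (g' (φ x)).bind h' := by
  rw [← hg x hx, Option.bind_map, Option.map_bind]
  exact Option.bind_congr fun y hy => hh y (hgS x hx y hy)

theorem eq_of_map_eq_of_injOn {φ : α → β} {S : Set α} (hφ : Set.InjOn φ S) {o o' : Option α}
    (ho : ∀ y, o = some y → y ∈ S) (ho' : ∀ y, o' = some y → y ∈ S)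
    (h : o.map φ = o'.map φ) : o = o' := by
  cases o <;> cases o' <;> simp_all [hφ.eq_iff]

theorem bind_comm_of_injOn {φ : α → β} {S : Set α} (hφ : Set.InjOn φ S)
    {g h : α → Option α} {g' h' : β → Option β}
    (hgS : ∀ x ∈ S, ∀ y, g x = some y → y ∈ S) (hhS : ∀ x ∈ S, ∀ y, h x = some y → y ∈ S)
    (hg : ∀ x ∈ S, (g x).map φ = g' (φ x)) (hh : ∀ x ∈ S, (h x).map φ = h' (φ x))
    {x : α} (hx : x ∈ S) (hcomm : (g' (φ x)).bind h' = (h' (φ x)).bind g') :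
    (g x).bind h = (h x).bind g := by
  have mem_bind : ∀ {g h : α → Option α}, (∀ x ∈ S, ∀ y, g x = some y → y ∈ S) →
      (∀ x ∈ S, ∀ y, h x = some y → y ∈ S) → ∀ y, (g x).bind h = some y → y ∈ S :=
    fun hgS hhS y hy => by
      obtain ⟨z, hz, hzy⟩ := Option.bind_eq_some_iff.1 hy
      exact hhS z (hgS x hx z hz) y hzy
  refine eq_of_map_eq_of_injOn hφ (mem_bind hgS hhS) (mem_bind hhS hgS) ?_
  rw [map_bind_eq_of_map_eq hgS hg hh hx, map_bind_eq_of_map_eq hhS hh hg hx, hcomm]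

end OptionOps

section StringLength

variable {B : Type}

noncomputable def stringLength (g : B → Option B) (b : B) : ℕ := sSup {k | iterO g k b ≠ none}

theorem iterO_eq_none_of_le {g : B → Option B} {b : B} {k k' : ℕ} (hk : k ≤ k')
    (h : iterO g k b = none) : iterO g k' b = none := by
  induction k', hk using Nat.le_induction with
  | base => exact h
  | succ k' _ ih => simp [iterO, ih]

theorem stringLength_eq_zero_iff {g : B → Option B} {b : B} (hg : ∃ N, iterO g N b = none) :
    stringLength g b = 0 ↔ g b = none := by
  obtain ⟨N, hN⟩ := hg
  have hbdd : BddAbove {k | iterO g k b ≠ none} :=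
    ⟨N, fun k hk => not_lt.1 fun hNk => hk (iterO_eq_none_of_le hNk.le hN)⟩
  constructor
  · intro h
    by_contra hb
    have : 1 ≤ stringLength g b := le_csSup hbdd (by simpa [iterO] using hb)
    omega
  · intro h
    exact Nat.le_zero.1 <| csSup_le' fun k hk =>
      not_lt.1 fun hk0 => hk (iterO_eq_none_of_le hk0 (by simpa [iterO] using h))

theorem stringLength_le_of_bind_comm {g e : B → Option B} {b c : B}
    (hb : stringLength g b ≤ 1) (hgc : ∃ N, iterO g N c = none) (hc : e b = some c)
    (hcomm : (g b).bind e = (e b).bind g) (he : ∀ z, g b = some z → e z ≠ none) :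
    stringLength g b ≤ stringLength g c := by
  cases hz : g b with
  | none => simp [(stringLength_eq_zero_iff ⟨1, by simpa [iterO] using hz⟩).2 hz]
  | some z =>
    obtain ⟨w, hw⟩ := Option.ne_none_iff_exists'.1 (he z hz)
    have hgc' : g c ≠ none := by
      rw [hz, hc, Option.bind_some, Option.bind_some, hw] at hcomm
      simp [← hcomm]
    have := mt (stringLength_eq_zero_iff hgc).1 hgc'
    omega

end StringLength

namespace Crystal

variable {n : ℕ} {B B' : Type}

/-- The behaviour of `e_0, f_0, e_1̄` on the tensor powers of `𝔹⁺_n`, in a form that passes to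
tensor products. -/
structure IsZeroBarCompatible (C : Crystal n B) : Prop where
  wt_one_nonneg : ∀ x, 0 ≤ C.wt x 1
  wt_one_e0 : ∀ {x y}, C.e0 x = some y → C.wt y 1 = C.wt x 1
  e0_eq_some_iff : ∀ {x y}, C.e0 x = some y ↔ C.f0 y = some x
  e0_eq_none_or_f0_eq_none : ∀ x, C.e0 x = none ∨ C.f0 x = none
  exists_e0_or_f0 : ∀ {x}, C.wt x 1 ≠ 0 → (∃ y, C.e0 x = some y) ∨ ∃ y, C.f0 x = some y
  wt_one_ebar_ne_zero : ∀ {x y}, C.ebar x = some y → C.wt y 1 ≠ 0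
  e0_bind_ebar : ∀ {x}, C.wt x 1 ≠ 0 → (C.e0 x).bind C.ebar = (C.ebar x).bind C.e0
  f0_bind_ebar : ∀ {x}, C.wt x 1 ≠ 0 → (C.f0 x).bind C.ebar = (C.ebar x).bind C.f0

namespace IsZeroBarCompatible

variable {C : Crystal n B}

theorem wt_one_f0 (hC : IsZeroBarCompatible C) {x y : B} (h : C.f0 x = some y) :
    C.wt y 1 = C.wt x 1 :=
  (hC.wt_one_e0 (hC.e0_eq_some_iff.2 h)).symm

theorem f0_eq_none_of_e0 (hC : IsZeroBarCompatible C) {x y : B} (h : C.e0 x = some y) :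
    C.f0 x = none :=
  (hC.e0_eq_none_or_f0_eq_none x).resolve_left (by simp [h])

theorem e0_eq_none_of_f0 (hC : IsZeroBarCompatible C) {x y : B} (h : C.f0 x = some y) :
    C.e0 x = none :=
  (hC.e0_eq_none_or_f0_eq_none x).resolve_right (by simp [h])

theorem e0_e0 (hC : IsZeroBarCompatible C) {x y : B} (h : C.e0 x = some y) : C.e0 y = none :=
  hC.e0_eq_none_of_f0 (hC.e0_eq_some_iff.1 h)

end IsZeroBarCompatible

theorem isZeroBarCompatible_unitC : IsZeroBarCompatible (unitC n) := by
  constructor <;> simp [unitC]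

theorem isZeroBarCompatible_stdC : IsZeroBarCompatible (stdC n) := by
  constructor
  · rintro ⟨a, p⟩
    simp only [stdC]
    split_ifs <;> norm_num
  · rintro x y h
    simp only [stdC] at h
    split_ifs at h with hx
    obtain ⟨-, rfl⟩ := hx
    cases h
    rfl
  · rintro ⟨a, p⟩ ⟨a', p'⟩
    simp only [stdC]
    split_ifs <;> simp_all
  · rintro ⟨a, p⟩
    simp only [stdC]
    split_ifs <;> simp_all
  · rintro ⟨a, p⟩ h
    simp only [stdC] at h ⊢
    split_ifs at h ⊢ <;> simp_all
  · rintro x y h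
    simp only [stdC] at h
    split_ifs at h with hx
    cases h
    simp [stdC]
    omega
  all_goals
    rintro ⟨a, p⟩ h
    simp only [stdC] at h ⊢
    split_ifs at h ⊢ <;> simp_all

/-- Exchanging `e_0` and `f_0` preserves `IsZeroBarCompatible` and, by `tensor_swapZero_ebar`,
the tensor rule for `e_1̄`; this is how the statements about `f_0` are reduced to those
about `e_0`. -/
def swapZero (C : Crystal n B) : Crystal n B := { C with e0 := C.f0, f0 := C.e0 }

theorem IsZeroBarCompatible.swapZero {C : Crystal n B} (hC : IsZeroBarCompatible C) :
    IsZeroBarCompatible C.swapZero where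
  wt_one_nonneg := hC.wt_one_nonneg
  wt_one_e0 := hC.wt_one_f0
  e0_eq_some_iff := hC.e0_eq_some_iff.symm
  e0_eq_none_or_f0_eq_none x := (hC.e0_eq_none_or_f0_eq_none x).symm
  exists_e0_or_f0 hx := (hC.exists_e0_or_f0 hx).symm
  wt_one_ebar_ne_zero := hC.wt_one_ebar_ne_zero
  e0_bind_ebar := hC.f0_bind_ebar
  f0_bind_ebar := hC.e0_bind_ebar

section Tensor

variable {C : Crystal n B} {D : Crystal n B'} {u : B} {l : B'}

theorem tensor_wt (j : ℕ) : (tensor C D).wt (u, l) j = C.wt u j + D.wt l j :=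
  rfl

theorem tensor_e0_fst (hu : C.wt u 1 ≠ 0) : (tensor C D).e0 (u, l) = (C.e0 u).map (·, l) :=
  if_pos hu

theorem tensor_e0_snd (hu : C.wt u 1 = 0) : (tensor C D).e0 (u, l) = (D.e0 l).map (u, ·) :=
  if_neg (not_not.2 hu)

theorem tensor_f0_fst (hu : C.wt u 1 ≠ 0) : (tensor C D).f0 (u, l) = (C.f0 u).map (·, l) :=
  if_pos hu

theorem tensor_f0_snd (hu : C.wt u 1 = 0) : (tensor C D).f0 (u, l) = (D.f0 l).map (u, ·) :=
  if_neg (not_not.2 hu)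

theorem tensor_ebar_fst (hu : C.wt u 1 ≠ 0) :
    (tensor C D).ebar (u, l) = (C.ebar u).map (·, l) := by
  simp [tensor, hu]

theorem tensor_ebar_snd (hu1 : C.wt u 1 = 0) (hu2 : C.wt u 2 = 0) :
    (tensor C D).ebar (u, l) = (D.ebar l).map (u, ·) := by
  simp [tensor, hu1, hu2]

theorem tensor_ebar_eq_none (hu : ¬(C.wt u 1 = 0 ∧ C.wt u 2 = 0)) (h : C.ebar u = none) :
    (tensor C D).ebar (u, l) = none := by
  simp [tensor, hu, h]

/- If `wt(u)_1 = 0 ≠ wt(u)_2` and `e_1̄ u = w`, then `e_1̄ (u ⊗ l)` is `w ⊗ l` with the positions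
of `w` and `l` in their `0`-strings exchanged. -/
theorem tensor_ebar_of_f0_of_e0 (hu1 : C.wt u 1 = 0) (hu2 : C.wt u 2 ≠ 0) {w w' : B} {l' : B'}
    (hw : C.ebar u = some w) (hw' : C.f0 w = some w') (hl : D.e0 l = some l') :
    (tensor C D).ebar (u, l) = some (w', l') := by
  simp [tensor, hu1, hu2, hw, hw', hl]

theorem tensor_ebar_of_e0_of_f0 (hD : IsZeroBarCompatible D) (hu1 : C.wt u 1 = 0)
    (hu2 : C.wt u 2 ≠ 0) {w w' : B} {l' : B'}
    (hw : C.ebar u = some w) (hw' : C.e0 w = some w') (hl : D.f0 l = some l') :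
    (tensor C D).ebar (u, l) = some (w', l') := by
  simp [tensor, hu1, hu2, hw, hw', hl, hD.e0_eq_none_of_f0 hl]

theorem tensor_ebar_of_not_opposite (hu1 : C.wt u 1 = 0) (hu2 : C.wt u 2 ≠ 0) {w : B}
    (hw : C.ebar u = some w) (hfe : C.f0 w = none ∨ D.e0 l = none)
    (hef : C.e0 w = none ∨ D.f0 l = none) :
    (tensor C D).ebar (u, l) = some (w, l) := by
  rcases hfe with h | h <;> rcases hef with h' | h' <;> simp [tensor, hu1, hu2, hw, h, h']

theorem exists_tensor_ebar_eq_some (hC : IsZeroBarCompatible C) (hD : IsZeroBarCompatible D)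
    (hu1 : C.wt u 1 = 0) (hu2 : C.wt u 2 ≠ 0) {w : B} (hw : C.ebar u = some w) :
    ∃ w' l', (tensor C D).ebar (u, l) = some (w', l') ∧ C.wt w' 1 = C.wt w 1 := by
  rcases hC.exists_e0_or_f0 (hC.wt_one_ebar_ne_zero hw) with ⟨w', hw'⟩ | ⟨w', hw'⟩
  · cases hl : D.f0 l with
    | none => exact ⟨w, l, tensor_ebar_of_not_opposite hu1 hu2 hw
        (Or.inl (hC.f0_eq_none_of_e0 hw')) (Or.inr hl), rfl⟩
    | some l' => exact ⟨w', l', tensor_ebar_of_e0_of_f0 hD hu1 hu2 hw hw' hl, hC.wt_one_e0 hw'⟩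
  · cases hl : D.e0 l with
    | none => exact ⟨w, l, tensor_ebar_of_not_opposite hu1 hu2 hw
        (Or.inr hl) (Or.inl (hC.e0_eq_none_of_f0 hw')), rfl⟩
    | some l' => exact ⟨w', l', tensor_ebar_of_f0_of_e0 hu1 hu2 hw hw' hl, hC.wt_one_f0 hw'⟩

theorem tensor_wt_one_ebar_ne_zero (hC : IsZeroBarCompatible C) (hD : IsZeroBarCompatible D)
    {y : B × B'} (h : (tensor C D).ebar (u, l) = some y) : (tensor C D).wt y 1 ≠ 0 := by
  have hpos : ∀ u' l', C.wt u' 1 ≠ 0 → (tensor C D).wt (u', l') 1 ≠ 0 := fun u' l' hu' => by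
    have := hC.wt_one_nonneg u'
    have := hD.wt_one_nonneg l'
    rw [tensor_wt]
    omega
  by_cases hu1 : C.wt u 1 = 0
  · by_cases hu2 : C.wt u 2 = 0
    · rw [tensor_ebar_snd hu1 hu2] at h
      obtain ⟨z, hz, rfl⟩ := Option.map_eq_some_iff.1 h
      simpa [tensor_wt, hu1] using hD.wt_one_ebar_ne_zero hz
    · cases hw : C.ebar u with
      | none => simp [tensor_ebar_eq_none (D := D) (l := l) (by tauto) hw] at h
      | some w =>
        obtain ⟨w', l', h', hw'⟩ := exists_tensor_ebar_eq_some hC hD hu1 hu2 hw (l := l)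
        rw [h', Option.some_inj] at h
        subst h
        exact hpos _ _ (hw' ▸ hC.wt_one_ebar_ne_zero hw)
  · rw [tensor_ebar_fst hu1] at h
    obtain ⟨w, hw, rfl⟩ := Option.map_eq_some_iff.1 h
    exact hpos _ _ (hC.wt_one_ebar_ne_zero hw)

theorem tensor_e0_bind_ebar_fst (hC : IsZeroBarCompatible C) (hu : C.wt u 1 ≠ 0) :
    ((tensor C D).e0 (u, l)).bind (tensor C D).ebar =
      ((tensor C D).ebar (u, l)).bind (tensor C D).e0 :=
  calc ((tensor C D).e0 (u, l)).bind (tensor C D).ebar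
      = ((C.e0 u).bind C.ebar).map (·, l) := by
        rw [tensor_e0_fst hu, Option.bind_map, Option.map_bind]
        exact Option.bind_congr fun z hz => tensor_ebar_fst (by rwa [hC.wt_one_e0 hz])
    _ = ((C.ebar u).bind C.e0).map (·, l) := by rw [hC.e0_bind_ebar hu]
    _ = ((tensor C D).ebar (u, l)).bind (tensor C D).e0 := by
        rw [tensor_ebar_fst hu, Option.bind_map, Option.map_bind]
        exact (Option.bind_congr fun w hw => tensor_e0_fst (hC.wt_one_ebar_ne_zero hw)).symm

theorem tensor_e0_bind_ebar_snd (hD : IsZeroBarCompatible D) (hu1 : C.wt u 1 = 0)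
    (hu2 : C.wt u 2 = 0) (hl : D.wt l 1 ≠ 0) :
    ((tensor C D).e0 (u, l)).bind (tensor C D).ebar =
      ((tensor C D).ebar (u, l)).bind (tensor C D).e0 :=
  calc ((tensor C D).e0 (u, l)).bind (tensor C D).ebar
      = ((D.e0 l).bind D.ebar).map (u, ·) := by
        rw [tensor_e0_snd hu1, Option.bind_map, Option.map_bind]
        exact Option.bind_congr fun z _ => tensor_ebar_snd hu1 hu2
    _ = ((D.ebar l).bind D.e0).map (u, ·) := by rw [hD.e0_bind_ebar hl]
    _ = ((tensor C D).ebar (u, l)).bind (tensor C D).e0 := by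
        rw [tensor_ebar_snd hu1 hu2, Option.bind_map, Option.map_bind]
        exact (Option.bind_congr fun w _ => tensor_e0_snd hu1).symm

theorem tensor_e0_bind_ebar_mixed (hC : IsZeroBarCompatible C) (hD : IsZeroBarCompatible D)
    (hu1 : C.wt u 1 = 0) (hu2 : C.wt u 2 ≠ 0) (hl : D.wt l 1 ≠ 0) :
    ((tensor C D).e0 (u, l)).bind (tensor C D).ebar =
      ((tensor C D).ebar (u, l)).bind (tensor C D).e0 := by
  rw [tensor_e0_snd hu1]
  cases hw : C.ebar u with
  | none =>
    have hnone : ∀ l' : B', (tensor C D).ebar (u, l') = none :=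
      fun _ => tensor_ebar_eq_none (by tauto) hw
    cases D.e0 l <;> simp [hnone]
  | some w =>
    have hw1 := hC.wt_one_ebar_ne_zero hw
    rcases hD.exists_e0_or_f0 hl with ⟨l', hl'⟩ | ⟨l', hl'⟩ <;>
      rcases hC.exists_e0_or_f0 hw1 with ⟨w', hw'⟩ | ⟨w', hw'⟩
    · rw [hl', Option.map_some, Option.bind_some,
        tensor_ebar_of_e0_of_f0 hD hu1 hu2 hw hw' (hD.e0_eq_some_iff.1 hl'),
        tensor_ebar_of_not_opposite hu1 hu2 hw (Or.inl (hC.f0_eq_none_of_e0 hw'))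
          (Or.inr (hD.f0_eq_none_of_e0 hl')),
        Option.bind_some, tensor_e0_fst hw1, hw']
      rfl
    · rw [hl', Option.map_some, Option.bind_some,
        tensor_ebar_of_not_opposite hu1 hu2 hw (Or.inr (hD.e0_e0 hl'))
          (Or.inl (hC.e0_eq_none_of_f0 hw')),
        tensor_ebar_of_f0_of_e0 hu1 hu2 hw hw' hl', Option.bind_some,
        tensor_e0_fst (by rwa [hC.wt_one_f0 hw']), hC.e0_eq_some_iff.2 hw']
      rfl
    · rw [hD.e0_eq_none_of_f0 hl', tensor_ebar_of_e0_of_f0 hD hu1 hu2 hw hw' hl',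
        Option.bind_some, tensor_e0_fst (by rwa [hC.wt_one_e0 hw']), hC.e0_e0 hw']
      rfl
    · rw [hD.e0_eq_none_of_f0 hl',
        tensor_ebar_of_not_opposite hu1 hu2 hw (Or.inr (hD.e0_eq_none_of_f0 hl'))
          (Or.inl (hC.e0_eq_none_of_f0 hw')),
        Option.bind_some, tensor_e0_fst hw1, hC.e0_eq_none_of_f0 hw']
      rfl

theorem tensor_e0_bind_ebar (hC : IsZeroBarCompatible C) (hD : IsZeroBarCompatible D)
    {x : B × B'} (hx : (tensor C D).wt x 1 ≠ 0) :
    ((tensor C D).e0 x).bind (tensor C D).ebar = ((tensor C D).ebar x).bind (tensor C D).e0 := by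
  obtain ⟨u, l⟩ := x
  by_cases hu1 : C.wt u 1 = 0
  · have hl : D.wt l 1 ≠ 0 := by rwa [tensor_wt, hu1, zero_add] at hx
    by_cases hu2 : C.wt u 2 = 0
    · exact tensor_e0_bind_ebar_snd hD hu1 hu2 hl
    · exact tensor_e0_bind_ebar_mixed hC hD hu1 hu2 hl
  · exact tensor_e0_bind_ebar_fst hC hu1

theorem tensor_f0_of_e0 (hC : IsZeroBarCompatible C) (hD : IsZeroBarCompatible D)
    {x y : B × B'} (h : (tensor C D).e0 x = some y) : (tensor C D).f0 y = some x := by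
  obtain ⟨u, l⟩ := x
  by_cases hu : C.wt u 1 = 0
  · rw [tensor_e0_snd hu] at h
    obtain ⟨l', hl', rfl⟩ := Option.map_eq_some_iff.1 h
    rw [tensor_f0_snd hu, hD.e0_eq_some_iff.1 hl']
    rfl
  · rw [tensor_e0_fst hu] at h
    obtain ⟨u', hu', rfl⟩ := Option.map_eq_some_iff.1 h
    rw [tensor_f0_fst (by rwa [hC.wt_one_e0 hu']), hC.e0_eq_some_iff.1 hu']
    rfl

theorem tensor_swapZero_ebar (hD : IsZeroBarCompatible D) :
    (tensor C.swapZero D.swapZero).ebar = (tensor C D).ebar := by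
  funext ⟨u, l⟩
  rcases hD.e0_eq_none_or_f0_eq_none l with h | h <;> simp [tensor, swapZero, h]

theorem isZeroBarCompatible_tensor (hC : IsZeroBarCompatible C) (hD : IsZeroBarCompatible D) :
    IsZeroBarCompatible (tensor C D) where
  wt_one_nonneg x := add_nonneg (hC.wt_one_nonneg x.1) (hD.wt_one_nonneg x.2)
  wt_one_e0 {x y} h := by
    obtain ⟨u, l⟩ := x
    by_cases hu : C.wt u 1 = 0
    · rw [tensor_e0_snd hu] at h
      obtain ⟨l', hl', rfl⟩ := Option.map_eq_some_iff.1 h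
      simp only [tensor_wt, hD.wt_one_e0 hl']
    · rw [tensor_e0_fst hu] at h
      obtain ⟨u', hu', rfl⟩ := Option.map_eq_some_iff.1 h
      simp only [tensor_wt, hC.wt_one_e0 hu']
  e0_eq_some_iff := ⟨tensor_f0_of_e0 hC hD, tensor_f0_of_e0 hC.swapZero hD.swapZero⟩
  e0_eq_none_or_f0_eq_none := by
    rintro ⟨u, l⟩
    by_cases hu : C.wt u 1 = 0
    · rw [tensor_e0_snd hu, tensor_f0_snd hu]
      rcases hD.e0_eq_none_or_f0_eq_none l with h | h <;> simp [h]
    · rw [tensor_e0_fst hu, tensor_f0_fst hu]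
      rcases hC.e0_eq_none_or_f0_eq_none u with h | h <;> simp [h]
  exists_e0_or_f0 {x} hx := by
    obtain ⟨u, l⟩ := x
    by_cases hu : C.wt u 1 = 0
    · rw [tensor_e0_snd hu, tensor_f0_snd hu]
      have hl : D.wt l 1 ≠ 0 := by rwa [tensor_wt, hu, zero_add] at hx
      rcases hD.exists_e0_or_f0 hl with ⟨l', h⟩ | ⟨l', h⟩ <;> simp [h]
    · rw [tensor_e0_fst hu, tensor_f0_fst hu]
      rcases hC.exists_e0_or_f0 hu with ⟨u', h⟩ | ⟨u', h⟩ <;> simp [h]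
  wt_one_ebar_ne_zero {x _} h := by
    obtain ⟨u, l⟩ := x
    exact tensor_wt_one_ebar_ne_zero hC hD h
  e0_bind_ebar := tensor_e0_bind_ebar hC hD
  f0_bind_ebar hx := by
    have := tensor_e0_bind_ebar hC.swapZero hD.swapZero hx
    rwa [tensor_swapZero_ebar hD] at this

theorem isZeroBarCompatible_powC (n : ℕ) : ∀ m, IsZeroBarCompatible (powC n m)
  | 0 => isZeroBarCompatible_unitC
  | m + 1 => isZeroBarCompatible_tensor (isZeroBarCompatible_powC n m) isZeroBarCompatible_stdC

end Tensor

section Normal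

variable {C : Crystal n B}

theorem mem_component_of_f0 {b y z : B} (hy : y ∈ component C b) (h : C.f0 y = some z) :
    z ∈ component C b :=
  hy.tail (Or.inl (Or.inr (Or.inr h)))

theorem mem_component_of_e0 (hC : IsQPlus C) {b y z : B} (hy : y ∈ component C b)
    (h : C.e0 y = some z) : z ∈ component C b :=
  hy.tail (Or.inr (Or.inr (Or.inr ((hC.zero_iff y z).1 h))))

theorem mem_component_of_ebar (hC : IsQPlus C) {b y z : B} (hy : y ∈ component C b)
    (h : C.ebar y = some z) : z ∈ component C b :=
  hy.tail (Or.inr (Or.inr (Or.inl ((hC.bar_iff y z).1 h))))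

theorem IsNormal.zero_bind_ebar_comm (hC : IsNormal C) {b : B} (hb : C.wt b 1 ≠ 0) :
    (C.e0 b).bind C.ebar = (C.ebar b).bind C.e0 ∧
      (C.f0 b).bind C.ebar = (C.ebar b).bind C.f0 := by
  obtain ⟨hQ, hiso⟩ := hC
  obtain ⟨m, x, φ, hbij, hφ⟩ := hiso b
  have hP := isZeroBarCompatible_powC n m
  have hb' : (powC n m).wt (φ b) 1 ≠ 0 := by rwa [(hφ b .refl).1]
  have hebar : ∀ y ∈ component C b, (C.ebar y).map φ = (powC n m).ebar (φ y) :=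
    fun y hy => (hφ y hy).2.2.2.1
  have he0 : ∀ y ∈ component C b, (C.e0 y).map φ = (powC n m).e0 (φ y) :=
    fun y hy => (hφ y hy).2.2.2.2.2.1
  have hf0 : ∀ y ∈ component C b, (C.f0 y).map φ = (powC n m).f0 (φ y) :=
    fun y hy => (hφ y hy).2.2.2.2.2.2
  have hebarS : ∀ y ∈ component C b, ∀ z, C.ebar y = some z → z ∈ component C b :=
    fun _ hy _ => mem_component_of_ebar hQ hy
  exact ⟨bind_comm_of_injOn hbij.injOn (fun _ hy _ => mem_component_of_e0 hQ hy) hebarS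
      he0 hebar .refl (hP.e0_bind_ebar hb'),
    bind_comm_of_injOn hbij.injOn (fun _ hy _ => mem_component_of_f0 hy) hebarS
      hf0 hebar .refl (hP.f0_bind_ebar hb')⟩

theorem IsQPlus.ebar_eq_none_iff_of_e0 (hC : IsQPlus C) {x y : B} (h : C.e0 x = some y) :
    C.ebar x = none ↔ C.ebar y = none := by
  have hlen : stringLength C.ebar x = stringLength C.ebar y := (hC.e0_wt x y h).2.2.1
  rw [← stringLength_eq_zero_iff (hC.ebar_bdd x), ← stringLength_eq_zero_iff (hC.ebar_bdd y),
    hlen]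

theorem IsNormal.eps0_le_and_phi0_le_of_ebar (hC : IsNormal C) {b c : B}
    (hc : C.ebar b = some c) : C.eps0 b ≤ C.eps0 c ∧ C.phi0 b ≤ C.phi0 c := by
  have hQ := hC.1
  have hstr := hQ.zero_string b
  by_cases hb : C.wt b 1 = 0
  · rw [if_pos hb] at hstr
    omega
  rw [if_neg hb] at hstr
  have heps : C.eps0 b ≤ 1 := by omega
  have hphi : C.phi0 b ≤ 1 := by omega
  have hne : C.ebar b ≠ none := by simp [hc]
  obtain ⟨he0, hf0⟩ := hC.zero_bind_ebar_comm hb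
  exact ⟨stringLength_le_of_bind_comm heps (hQ.e0_bdd c) hc he0
      fun _ hz => (hQ.ebar_eq_none_iff_of_e0 hz).not.1 hne,
    stringLength_le_of_bind_comm hphi (hQ.f0_bdd c) hc hf0
      fun z hz => (hQ.ebar_eq_none_iff_of_e0 ((hQ.zero_iff z b).2 hz)).not.2 hne⟩

end Normal

end Crystal

theorem normal_ebar_e0_props_general (n : ℕ) {B : Type} (C : Crystal n B)
    (hnorm : IsNormal C) (b : B) :
    (C.wt b 1 ≠ 0 →
      (C.e0 b).bind C.ebar = (C.ebar b).bind C.e0 ∧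
      (C.f0 b).bind C.ebar = (C.ebar b).bind C.f0) ∧
    (∀ c : B, C.ebar b = some c → C.eps0 b ≤ C.eps0 c ∧ C.phi0 b ≤ C.phi0 c) :=
  ⟨hnorm.zero_bind_ebar_comm, fun _ hc => hnorm.eps0_le_and_phi0_le_of_ebar hc⟩

/-- In a normal `q⁺_n`-crystal (`n ≥ 2`): (a) if `wt(b)_1 ≠ 0` then
`e_1̄ e_0 (b) = e_0 e_1̄ (b)` and `e_1̄ f_0 (b) = f_0 e_1̄ (b)`;
(b) if `e_1̄(b) = c` then `ε_0(b) ≤ ε_0(c)` and `φ_0(b) ≤ φ_0(c)`. -/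
theorem normal_ebar_e0_props (n : ℕ) (hn : 2 ≤ n) {B : Type} (C : Crystal n B)
    (hnorm : IsNormal C) (b : B) :
    (C.wt b 1 ≠ 0 →
      (C.e0 b).bind C.ebar = (C.ebar b).bind C.e0 ∧
      (C.f0 b).bind C.ebar = (C.ebar b).bind C.f0) ∧
    (∀ c : B, C.ebar b = some c → C.eps0 b ≤ C.eps0 c ∧ C.phi0 b ≤ C.phi0 c) :=
  normal_ebar_e0_props_general n C hnorm b

end QPaper
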